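/- arXiv:1812.00434 — 4 statements merged into one kernel-verified Lean document; each statement's English description precedes it below -/
import Mathlib

section
/- Let (f_n)_{n≥0}, (g_n)_{n≥0}, (h_n)_{n≥0} be polynomials in ℝ[t] satisfying h_n(t) = Σ_{m=0}^n C(n,m) t^{n−m} g_m(t) for all n ≥ 0 and g_m(t) = Σ_{k=0}^m C(m,k) f_k(t) for all m ≥ 0. If for every n ≥ 0 there exist scalars ξ_{n,i} (0 ≤ i ≤ ⌊n/2⌋) with f_n(t) = Σ_{i=0}^{⌊n/2⌋} ξ_{n,i} t^i (1+t)^{n−2i}, then for every n ≥ 0 one has h_n(t) = Σ_{i=0}^{⌊n/2⌋} ( Σ_{k=2i}^n C(n,k) ξ_{k,i} ) t^i (1+t)^{n−2i}. In particular, if all ξ_{n,i} are nonnegative, then each h_n(t) is γ-positive with center n/2. -/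
open Polynomial Finset

/-! Composing the two binomial transforms gives `h n = ∑ₖ C(n,k) (1+t)^(n-k) f k`, since
`∑ₘ C(n,m) C(m,k) t^(n-m) = C(n,k) (1+t)^(n-k)`. Multiplying the expansion of `f k` by
`(1+t)^(n-k)` turns each `t^i (1+t)^(k-2i)` into `t^i (1+t)^(n-2i)`, so collecting the terms by `i`
yields the γ-coefficients `∑ₖ C(n,k) ξ k i`, which are nonnegative when the `ξ k i` are. -/

section BinomialTransform

variable {R : Type*} [CommSemiring R]

theorem sum_choose_mul_choose_mul_pow (a : R) {n k : ℕ} (hk : k ≤ n) :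
    ∑ m ∈ range (n + 1), (n.choose m * m.choose k : R) * a ^ (n - m)
      = n.choose k * (1 + a) ^ (n - k) := by
  obtain ⟨d, rfl⟩ := Nat.exists_eq_add_of_le hk
  have below : ∀ m ∈ range k, ((k + d).choose m * m.choose k : R) * a ^ (k + d - m) = 0 :=
    fun m hm => by rw [Nat.choose_eq_zero_of_lt (mem_range.1 hm), Nat.cast_zero, mul_zero, zero_mul]
  rw [show k + d + 1 = k + (d + 1) by omega, sum_range_add, sum_eq_zero below, zero_add, add_pow,
    mul_sum, Nat.add_sub_cancel_left]
  refine sum_congr rfl fun j _ => ?_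
  rw [← Nat.cast_mul, Nat.choose_mul (Nat.le_add_right k j), Nat.add_sub_cancel_left,
    Nat.add_sub_cancel_left, Nat.sub_add_eq, Nat.add_sub_cancel_left]
  push_cast
  ring

theorem sum_choose_mul_pow_mul_sum_choose_mul (a : R) (f : ℕ → R) (n : ℕ) :
    ∑ m ∈ range (n + 1), (n.choose m : R) * a ^ (n - m) * ∑ k ∈ range (m + 1), (m.choose k : R) * f k
      = ∑ k ∈ range (n + 1), (n.choose k : R) * (1 + a) ^ (n - k) * f k := by
  have extend : ∀ m ∈ range (n + 1), ∑ k ∈ range (m + 1), (m.choose k : R) * f k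
      = ∑ k ∈ range (n + 1), (m.choose k : R) * f k := by
    refine fun m hm => sum_subset (range_subset_range.2 (by simpa using hm)) fun k _ hk => ?_
    rw [Nat.choose_eq_zero_of_lt (by simpa using hk), Nat.cast_zero, zero_mul]
  rw [sum_congr rfl fun m hm => by rw [extend m hm, mul_sum], sum_comm]
  refine sum_congr rfl fun k hk => ?_
  rw [← sum_choose_mul_choose_mul_pow a (Nat.le_of_lt_succ (mem_range.1 hk)), sum_mul]
  refine sum_congr rfl fun m _ => ?_
  ring

theorem sum_choose_mul_pow_mul_sum_pow_mul_pow (c : ℕ → ℕ → R) (x y : R) (n : ℕ) :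
    ∑ k ∈ range (n + 1), (n.choose k : R) * y ^ (n - k) *
        ∑ i ∈ range (k / 2 + 1), c k i * x ^ i * y ^ (k - 2 * i)
      = ∑ i ∈ range (n / 2 + 1), (∑ k ∈ Icc (2 * i) n, (n.choose k : R) * c k i) *
          x ^ i * y ^ (n - 2 * i) := by
  simp_rw [mul_sum, sum_mul]
  rw [sum_comm' (t' := range (n / 2 + 1)) (s' := fun i => Icc (2 * i) n)
    fun k i => by simp only [mem_range, mem_Icc]; omega]
  refine sum_congr rfl fun i _ => sum_congr rfl fun k hk => ?_
  have hik : n - 2 * i = (n - k) + (k - 2 * i) := by simp only [mem_Icc] at hk; omega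
  rw [hik, pow_add]
  ring

end BinomialTransform

/-- If `h n = Σ_m C(n,m) t^{n−m} g m`, `g m = Σ_k C(m,k) f k`, and each
`f n` has an expansion `f n = Σ_i ξ_{n,i} t^i (1+t)^{n−2i}`, then
`h n = Σ_i (Σ_{k=2i}^n C(n,k) ξ_{k,i}) t^i (1+t)^{n−2i}`; in particular, if all `ξ_{n,i}`
are nonnegative then each `h n` is γ-positive with center `n/2`. -/
theorem binomial_compose_gamma {f g h : ℕ → ℝ[X]} (ξ : ℕ → ℕ → ℝ)
    (hgh : ∀ n, h n = ∑ m ∈ range (n + 1), (n.choose m : ℝ[X]) * X ^ (n - m) * g m)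
    (hfg : ∀ m, g m = ∑ k ∈ range (m + 1), (m.choose k : ℝ[X]) * f k)
    (hf : ∀ n, f n = ∑ i ∈ range (n / 2 + 1), C (ξ n i) * X ^ i * (1 + X) ^ (n - 2 * i)) :
    (∀ n, h n = ∑ i ∈ range (n / 2 + 1),
        C (∑ k ∈ Icc (2 * i) n, (n.choose k : ℝ) * ξ k i) * X ^ i * (1 + X) ^ (n - 2 * i)) ∧
    ((∀ n i, 0 ≤ ξ n i) → ∀ n, ∃ γ : ℕ → ℝ, (∀ i, 0 ≤ γ i) ∧
        h n = ∑ i ∈ range (n / 2 + 1), C (γ i) * X ^ i * (1 + X) ^ (n - 2 * i)) := by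
  have expansion : ∀ n, h n = ∑ i ∈ range (n / 2 + 1),
      C (∑ k ∈ Icc (2 * i) n, (n.choose k : ℝ) * ξ k i) * X ^ i * (1 + X) ^ (n - 2 * i) := by
    intro n
    simp_rw [hgh n, hfg, sum_choose_mul_pow_mul_sum_choose_mul, hf,
      sum_choose_mul_pow_mul_sum_pow_mul_pow (fun k i => C (ξ k i)), map_sum, map_mul, map_natCast]
  refine ⟨expansion, fun hξ n => ⟨_, fun i => ?_, expansion n⟩⟩
  exact sum_nonneg fun k _ => mul_nonneg (Nat.cast_nonneg _) (hξ k i)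
end

section
/- For all positive integers n and r, the following identity of formal power series in ℤ[[t]] holds: Σ_{w ∈ (ℤ_r≀S_n)⁺} t^{des(w)} = (1−t)^n · Σ_{k≥0} ((rk+1)^n − (rk)^n) t^k, where (ℤ_r≀S_n)⁺ is the set of w = (σ,ε) ∈ ℤ_r ≀ S_n with ε_1 = 0. -/
open Polynomial Finset

/-- An `r`-colored permutation of `[n] = {1,…,n}`: a pair `(σ, ε)` of a permutation `σ`
of `[n]` and a color vector `ε ∈ {0,…,r−1}ⁿ`; the set of these is `ℤ_r ≀ S_n`. -/
abbrev ColoredPerm (n r : ℕ) := Equiv.Perm (Fin n) × (Fin n → Fin r)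

/-- The (1-based) value `σ(k) ∈ [n]` of a permutation of `[n]` at position `k ∈ [n]`,
with the convention `σ(k) = n+1` for positions outside `[1,n]`. -/
def sVal {n : ℕ} (σ : Equiv.Perm (Fin n)) (k : ℕ) : ℕ :=
  if h : 1 ≤ k ∧ k ≤ n then (σ ⟨k - 1, by omega⟩ : ℕ) + 1 else n + 1

/-- The (1-based) color `ε_k` at position `k ∈ [n]`, with the convention `ε_k = 0`
for positions outside `[1,n]`. -/
def eVal {n r : ℕ} (ε : Fin n → Fin r) (k : ℕ) : ℕ :=
  if h : 1 ≤ k ∧ k ≤ n then (ε ⟨k - 1, by omega⟩ : ℕ) else 0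

/-- The descent set `Des(w) ⊆ [n]` of an `r`-colored permutation `w = (σ, ε)`:
`k ∈ [n]` is a descent if `ε_k > ε_{k+1}`, or `ε_k = ε_{k+1}` and `σ(k) > σ(k+1)`,
with the conventions `σ(n+1) = n+1` and `ε_{n+1} = 0`. -/
def desSet {n r : ℕ} (w : ColoredPerm n r) : Finset ℕ :=
  (Finset.Icc 1 n).filter fun k =>
    eVal w.2 (k + 1) < eVal w.2 k ∨
      (eVal w.2 k = eVal w.2 (k + 1) ∧ sVal w.1 (k + 1) < sVal w.1 k)

/-- The ascent set `Asc(w) = [n] ∖ Des(w)`. -/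
def ascSet {n r : ℕ} (w : ColoredPerm n r) : Finset ℕ :=
  Finset.Icc 1 n \ desSet w

/-- The excedance set of `w = (σ, ε)`: the set of `k ∈ [n]` with `σ(k) > k`, or
`σ(k) = k` and `ε_k ≠ 0`. -/
def excSet {n r : ℕ} (w : ColoredPerm n r) : Finset ℕ :=
  (Finset.Icc 1 n).filter fun k => k < sVal w.1 k ∨ (sVal w.1 k = k ∧ eVal w.2 k ≠ 0)

/-- The colored Eulerian polynomial `A_{n,r}(t) = Σ_{w ∈ ℤ_r≀S_n} t^{des(w)}`
(with `A_{0,r}(t) = 1`). -/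
noncomputable def colEulerian (n r : ℕ) : ℤ[X] :=
  ∑ w : ColoredPerm n r, X ^ (desSet w).card

/-- The colored binomial Eulerian polynomial
`Ã_{n,r}(t) = Σ_{m=0}^n C(n,m) t^{n−m} A_{m,r}(t)`. -/
noncomputable def colBinomEulerian (n r : ℕ) : ℤ[X] :=
  ∑ m ∈ range (n + 1), (n.choose m : ℤ[X]) * X ^ (n - m) * colEulerian m r

open scoped Classical in
/-- `(ℤ_r≀S_n)⁺`: the set of colored permutations `w = (σ, ε)` with `ε_1 = 0`. -/
noncomputable def plusSet (n r : ℕ) : Finset (ColoredPerm n r) :=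
  Finset.univ.filter fun w => eVal w.2 1 = 0

/-!
Count the colorings `g : [n] → {0, …, rk}` that take the value `0`; there are
`(rk+1)ⁿ - (rk)ⁿ` of them. Sorting `g` stably and reducing the sorted values mod `r` gives a
colored permutation `w = (σ, ε)`, with `ε₁ = 0` because the smallest value is `0`. Writing the
sorted values as `r Lᵢ + εᵢ`, stability says exactly that the levels `Lᵢ` increase weakly, and
strictly across each descent of `w`. Subtracting from `Lᵢ` the number of descents to the left of
`i` identifies the colorings over `w` with the sequences `0 = c₁ ≤ ⋯ ≤ cₙ ≤ k - des w`, whose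
number `C(n - 1 + k - des w, n - 1)` has generating function `t^{des w} / (1 - t)ⁿ` in `k`.
-/

lemma Nat.mul_add_lt_mul_add_iff {r l l' e e' : ℕ} (he : e < r) (he' : e' < r) :
    r * l + e < r * l' + e' ↔ l < l' ∨ (l = l' ∧ e < e') := by
  rcases lt_trichotomy l l' with h | rfl | h
  · have := Nat.mul_le_mul_left r (Nat.succ_le_of_lt h)
    rw [Nat.mul_succ] at this
    omega
  · omega
  · have := Nat.mul_le_mul_left r (Nat.succ_le_of_lt h)
    rw [Nat.mul_succ] at this
    omega

lemma Nat.mul_add_le_mul_iff {r l k e : ℕ} (he : e < r) :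
    r * l + e ≤ r * k ↔ l + (if e ≠ 0 then 1 else 0) ≤ k := by
  have := (Nat.mul_add_lt_mul_add_iff (l := k) (e := 0) (l' := l) (e' := e) (by omega) he).not
  rw [add_zero] at this
  split_ifs <;> omega

lemma Nat.lex_mul_add_lt_iff {r l l' e e' a a' : ℕ} (he : e < r) (he' : e' < r) (ha : a ≠ a') :
    (r * l + e < r * l' + e' ∨ (r * l + e = r * l' + e' ∧ a < a')) ↔
      l + (if e' < e ∨ (e = e' ∧ a' < a) then 1 else 0) ≤ l' := by
  have h₁ := Nat.mul_add_lt_mul_add_iff (l := l) (l' := l') he he'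
  have h₂ := Nat.mul_add_lt_mul_add_iff (l := l') (l' := l) he' he
  split_ifs <;> omega

lemma Tuple.apply_sort_zero_le {n : ℕ} {α : Type*} [LinearOrder α] (g : Fin (n + 1) → α)
    (j : Fin (n + 1)) : g (Tuple.sort g 0) ≤ g j := by
  simpa using Tuple.monotone_sort g (Fin.zero_le ((Tuple.sort g).symm j))

lemma Fin.monotone_cons {n : ℕ} {α : Type*} [Preorder α] {f : Fin n → α} {a : α} :
    Monotone (Fin.cons a f : Fin (n + 1) → α) ↔ (∀ i, a ≤ f i) ∧ Monotone f := by
  simpa only [monotone_iff_forall_lt, Relator.LiftFun] using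
    Fin.liftFun_cons (α := α) (· ≤ ·) (f := f) (a := a)

lemma Fin.val_add_sub_le_of_strictMono {L K : ℕ} {s : Fin L → Fin K} (hs : StrictMono s)
    {i j : Fin L} (hij : i ≤ j) : (s i : ℕ) + (j - i) ≤ s j := by
  obtain ⟨d, hd⟩ : ∃ d, (j : ℕ) = i + d := ⟨j - i, by omega⟩
  induction d generalizing j with
  | zero => rw [show j = i from Fin.ext (by omega)]; simp
  | succ d ih =>
    have := ih (j := ⟨i + d, by omega⟩) (Fin.le_def.mpr (by simp)) rfl
    have := Fin.lt_def.mp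
      (hs (show (⟨i + d, by omega⟩ : Fin L) < j from Fin.lt_def.mpr (by simp; omega)))
    simp only at *
    omega

lemma card_filter_strictMono (L K : ℕ) :
    #(univ.filter fun f : Fin L → Fin K => StrictMono f) = K.choose L := by
  let e : {f : Fin L → Fin K // StrictMono f} ≃ (Fin L ↪o Fin K) :=
    { toFun := fun f => OrderEmbedding.ofStrictMono f.1 f.2
      invFun := fun f => ⟨f, f.strictMono⟩
      left_inv := fun _ => rfl
      right_inv := fun _ => rfl }
  rw [← Fintype.card_subtype, ← Nat.card_eq_fintype_card,
    Nat.card_congr (e.trans Set.powersetCard.ofFinEmbEquiv), Set.powersetCard.card, Nat.card_fin]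

lemma card_filter_monotone (L M : ℕ) :
    #(univ.filter fun f : Fin L → Fin (M + 1) => Monotone f) = (L + M).choose L := by
  rw [← card_filter_strictMono]
  refine card_bij' (fun f _ i => ⟨f i + i, by have := (f i).isLt; have := i.isLt; omega⟩)
    (fun s hs i => ⟨s i - i, ?_⟩) ?_ ?_ ?_ ?_
  · have hi := i.isLt
    have := Fin.val_add_sub_le_of_strictMono (mem_filter.mp hs).2
      (i := i) (j := ⟨L - 1, by omega⟩) (Fin.le_def.mpr (by simp; omega))
    have := (s ⟨L - 1, by omega⟩).isLt
    simp only at *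
    omega
  · intro f hf
    refine mem_filter.mpr ⟨mem_univ _, fun a b hab => ?_⟩
    have := (mem_filter.mp hf).2 hab.le
    rw [Fin.lt_def] at hab ⊢
    rw [Fin.le_def] at this
    simp only
    omega
  · intro s hs
    refine mem_filter.mpr ⟨mem_univ _, fun a b hab => ?_⟩
    have := Fin.val_add_sub_le_of_strictMono (mem_filter.mp hs).2 hab
    rw [Fin.le_def] at hab ⊢
    simp only
    omega
  · intro f hf
    ext i
    simp
  · intro s hs
    ext i
    have := Fin.val_add_sub_le_of_strictMono (mem_filter.mp hs).2
      (i := ⟨0, Fin.pos i⟩) (j := i) (Fin.le_def.mpr (Nat.zero_le _))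
    simp only at this ⊢
    omega

lemma card_filter_exists_eq_zero_add (n N : ℕ) :
    #(univ.filter fun g : Fin n → Fin (N + 1) => ∃ j, g j = 0) + N ^ n = (N + 1) ^ n := by
  have hne : univ.filter (fun g : Fin n → Fin (N + 1) => ¬∃ j, g j = 0) =
      Fintype.piFinset fun _ => ({0}ᶜ : Finset (Fin (N + 1))) := by
    ext g
    simp
  have := card_filter_add_card_filter_not (s := univ)
    (fun g : Fin n → Fin (N + 1) => ∃ j, g j = 0)
  rw [hne, Fintype.card_piFinset] at this
  simpa [card_compl] using this

lemma PowerSeries.one_sub_X_pow_mul_mk_choose {S : Type*} [CommRing S] (m d : ℕ) :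
    (1 - PowerSeries.X : PowerSeries S) ^ (m + 1) *
        PowerSeries.mk (fun k => if d ≤ k then ((m + (k - d)).choose m : S) else 0) =
      PowerSeries.X ^ d := by
  have : PowerSeries.mk (fun k => if d ≤ k then ((m + (k - d)).choose m : S) else 0) =
      PowerSeries.mk (fun k => ((m + k).choose m : S)) * PowerSeries.X ^ d := by
    ext k
    rw [PowerSeries.coeff_mk, PowerSeries.coeff_mul_X_pow', PowerSeries.coeff_mk]
  rw [this, ← mul_assoc, mul_comm _ (PowerSeries.mk _),
    PowerSeries.mk_add_choose_mul_one_sub_pow_eq_one, one_mul]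

namespace ColoredPerm

section Descents

variable {n r : ℕ}

lemma eVal_succ (ε : Fin n → Fin r) (i : Fin n) : eVal ε (i + 1) = ε i := by
  simp [eVal, i.isLt]

lemma sVal_succ (σ : Equiv.Perm (Fin n)) (i : Fin n) : sVal σ (i + 1) = σ i + 1 := by
  simp [sVal, i.isLt]

/-- The number of descents of `w` at positions `≤ j`; for a 0-based position `i`, `desUpTo w i`
counts the descents strictly to its left. -/
def desUpTo (w : ColoredPerm n r) (j : ℕ) : ℕ := #((desSet w).filter (· ≤ j))

lemma desSet_subset (w : ColoredPerm n r) : desSet w ⊆ Icc 1 n := filter_subset _ _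

lemma desUpTo_zero (w : ColoredPerm n r) : desUpTo w 0 = 0 := by
  rw [desUpTo, card_eq_zero, filter_eq_empty_iff]
  intro k hk
  have := mem_Icc.mp (desSet_subset w hk)
  omega

lemma desUpTo_succ (w : ColoredPerm n r) (j : ℕ) :
    desUpTo w (j + 1) = desUpTo w j + if j + 1 ∈ desSet w then 1 else 0 := by
  have : (desSet w).filter (· ≤ j + 1) =
      (desSet w).filter (· ≤ j) ∪ (desSet w).filter (· = j + 1) := by
    rw [← filter_or]; congr; ext k; omega
  rw [desUpTo, desUpTo, this,
    card_union_of_disjoint (disjoint_filter.mpr fun _ _ h₁ h₂ => by omega), filter_eq']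
  split_ifs <;> simp

lemma desUpTo_of_le (w : ColoredPerm n r) {j : ℕ} (hj : n ≤ j) :
    desUpTo w j = #(desSet w) := by
  rw [desUpTo, filter_true_of_mem]
  intro k hk
  exact (mem_Icc.mp (desSet_subset w hk)).2.trans hj

end Descents

section Positions

variable {m r : ℕ} (w : ColoredPerm (m + 1) r)

lemma succ_mem_desSet_iff (i : Fin m) :
    (i : ℕ) + 1 ∈ desSet w ↔ (w.2 i.succ : ℕ) < w.2 i.castSucc ∨
      ((w.2 i.castSucc : ℕ) = w.2 i.succ ∧ (w.1 i.succ : ℕ) < w.1 i.castSucc) := by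
  have h₁ := eVal_succ w.2 i.castSucc
  have h₂ := eVal_succ w.2 i.succ
  have h₃ := sVal_succ w.1 i.castSucc
  have h₄ := sVal_succ w.1 i.succ
  simp only [Fin.val_castSucc, Fin.val_succ] at h₁ h₂ h₃ h₄
  simp only [desSet, mem_filter, mem_Icc, h₁, h₂, h₃, h₄]
  omega

lemma last_mem_desSet_iff : m + 1 ∈ desSet w ↔ (w.2 (Fin.last m) : ℕ) ≠ 0 := by
  have h₁ := eVal_succ w.2 (Fin.last m)
  have h₂ := sVal_succ w.1 (Fin.last m)
  have h₃ : eVal w.2 (m + 2) = 0 := dif_neg (by omega)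
  have h₄ : sVal w.1 (m + 2) = m + 2 := dif_neg (by omega)
  have := (w.1 (Fin.last m)).isLt
  simp only [Fin.val_last] at h₁ h₂
  simp only [desSet, mem_filter, mem_Icc, h₁, h₂, h₃, h₄]
  omega

lemma card_desSet_eq :
    #(desSet w) = desUpTo w m + if (w.2 (Fin.last m) : ℕ) ≠ 0 then 1 else 0 := by
  simp only [← desUpTo_of_le w le_rfl, desUpTo_succ, last_mem_desSet_iff]

lemma mem_plusSet_iff : w ∈ plusSet (m + 1) r ↔ (w.2 0 : ℕ) = 0 := by
  have := eVal_succ w.2 0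
  simp only [Fin.val_zero, zero_add] at this
  simp [plusSet, this]

end Positions

section LevelSeq

variable {m r : ℕ} (w : ColoredPerm (m + 1) r)

/-- Exactly the condition on the levels `Lᵢ` of sorted values `r Lᵢ + εᵢ` for `w` to sort them
stably (`ofColoring_eq_iff`). -/
def IsLevelSeq (L : Fin (m + 1) → ℕ) : Prop :=
  ∀ i : Fin m, L i.castSucc + (if (i : ℕ) + 1 ∈ desSet w then 1 else 0) ≤ L i.succ

lemma isLevelSeq_add_desUpTo_iff (c : Fin (m + 1) → ℕ) :
    IsLevelSeq w (fun i => c i + desUpTo w i) ↔ Monotone c := by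
  rw [Fin.monotone_iff_le_succ]
  refine forall_congr' fun i => ?_
  simp only [Fin.val_succ, Fin.val_castSucc, desUpTo_succ]
  omega

variable {w}

lemma IsLevelSeq.desUpTo_le {L : Fin (m + 1) → ℕ} (hL : IsLevelSeq w L) (i : Fin (m + 1)) :
    desUpTo w i ≤ L i := by
  induction i using Fin.induction with
  | zero => simp [desUpTo_zero]
  | succ i ih =>
    have := hL i
    rw [Fin.val_succ, desUpTo_succ]
    rw [Fin.val_castSucc] at ih
    omega

lemma IsLevelSeq.monotone_mul_add {L : Fin (m + 1) → ℕ} (hL : IsLevelSeq w L) :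
    Monotone fun i => r * L i + w.2 i := by
  rw [Fin.monotone_iff_le_succ]
  intro i
  have hlex := Nat.mul_add_lt_mul_add_iff (r := r) (l := L i.succ) (l' := L i.castSucc)
    (w.2 i.succ).isLt (w.2 i.castSucc).isLt
  have := hL i
  split_ifs at this with hd <;> rw [succ_mem_desSet_iff] at hd <;> omega

end LevelSeq

end ColoredPerm

def reducedSeqs (m k d : ℕ) : Finset (Fin (m + 1) → Fin (k + 1)) :=
  univ.filter fun c => Monotone c ∧ c 0 = 0 ∧ (c (Fin.last m) : ℕ) + d ≤ k

lemma card_reducedSeqs (m k d : ℕ) :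
    #(reducedSeqs m k d) = if d ≤ k then (m + (k - d)).choose m else 0 := by
  split_ifs with hd
  · rw [← card_filter_monotone]
    refine card_bij' (fun c hc j => ⟨c j.succ, ?_⟩)
      (fun f _ => Fin.cons 0 fun j => Fin.castLE (by omega) (f j)) ?_ ?_ ?_ ?_
    · obtain ⟨hmono, -, hlast⟩ := (mem_filter.mp hc).2
      have := Fin.le_def.mp (hmono (Fin.le_last j.succ))
      omega
    · intro c hc
      exact mem_filter.mpr
        ⟨mem_univ _, fun a b h => (mem_filter.mp hc).2.1 (Fin.succ_le_succ_iff.mpr h)⟩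
    · intro f hf
      refine mem_filter.mpr
        ⟨mem_univ _, Fin.monotone_cons.mpr ⟨fun _ => Fin.zero_le _, ?_⟩, rfl, ?_⟩
      · exact fun a b h => (Fin.strictMono_castLE _).monotone ((mem_filter.mp hf).2 h)
      · have hle : ∀ i, ((Fin.cons 0 fun j => Fin.castLE (by omega) (f j) :
            Fin (m + 1) → Fin (k + 1)) i : ℕ) ≤ k - d :=
          Fin.cases (by simp) fun j => by simpa using Fin.is_le (f j)
        have := hle (Fin.last m)
        omega
    · intro c hc
      ext i
      cases i using Fin.cases with
      | zero => simp [(mem_filter.mp hc).2.2.1]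
      | succ i => simp
    · intro f hf
      ext i
      simp
  · refine card_eq_zero.mpr (filter_eq_empty_iff.mpr fun c _ ⟨_, _, h⟩ => hd (by omega))

namespace ColoredPerm

variable {m r k : ℕ}

lemma mul_add_le_of_mem_reducedSeqs {w : ColoredPerm (m + 1) r} {c : Fin (m + 1) → Fin (k + 1)}
    (hc : c ∈ reducedSeqs m k #(desSet w)) (i : Fin (m + 1)) :
    r * ((c i : ℕ) + desUpTo w i) + w.2 i ≤ r * k := by
  obtain ⟨hmono, -, hlast⟩ := (mem_filter.mp hc).2
  have hL : IsLevelSeq w fun i => (c i : ℕ) + desUpTo w i :=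
    (isLevelSeq_add_desUpTo_iff w _).mpr fun _ _ h => hmono h
  rw [card_desSet_eq] at hlast
  calc _ ≤ r * ((c (Fin.last m) : ℕ) + desUpTo w m) + w.2 (Fin.last m) :=
        hL.monotone_mul_add (Fin.le_last i)
    _ ≤ r * k := (Nat.mul_add_le_mul_iff (w.2 _).isLt).mpr (by omega)

def coloringOfLevels (w : ColoredPerm (m + 1) r) (L : Fin (m + 1) → ℕ)
    (hL : ∀ i, r * L i + w.2 i ≤ r * k) : Fin (m + 1) → Fin (r * k + 1) :=
  fun j => ⟨r * L (w.1.symm j) + w.2 (w.1.symm j), Nat.lt_succ_of_le (hL _)⟩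

lemma coloringOfLevels_apply_perm (w : ColoredPerm (m + 1) r) (L : Fin (m + 1) → ℕ)
    (hL : ∀ i, r * L i + w.2 i ≤ r * k) (i : Fin (m + 1)) :
    (coloringOfLevels w L hL (w.1 i) : ℕ) = r * L i + w.2 i := by
  simp [coloringOfLevels]

def level (g : Fin (m + 1) → Fin (r * k + 1)) (i : Fin (m + 1)) : ℕ := g (Tuple.sort g i) / r

lemma level_le (g : Fin (m + 1) → Fin (r * k + 1)) (i : Fin (m + 1)) : level g i ≤ k :=
  Nat.div_le_of_le_mul (Fin.is_le _)

lemma level_zero {g : Fin (m + 1) → Fin (r * k + 1)} (hg : ∃ j, g j = 0) : level g 0 = 0 := by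
  obtain ⟨j, hj⟩ := hg
  have := Tuple.apply_sort_zero_le g j
  simp_all [level]

section Standardization

variable [NeZero r]

def ofColoring (g : Fin (m + 1) → Fin (r * k + 1)) : ColoredPerm (m + 1) r :=
  (Tuple.sort g, fun i => Fin.ofNat r (g (Tuple.sort g i)))

lemma coe_apply_sort (g : Fin (m + 1) → Fin (r * k + 1)) (i : Fin (m + 1)) :
    (g ((ofColoring g).1 i) : ℕ) = r * level g i + (ofColoring g).2 i :=
  (Nat.div_add_mod _ _).symm

lemma ofColoring_eq_iff {w : ColoredPerm (m + 1) r} {g : Fin (m + 1) → Fin (r * k + 1)}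
    {L : Fin (m + 1) → ℕ} (hg : ∀ i, (g (w.1 i) : ℕ) = r * L i + w.2 i) :
    ofColoring g = w ↔ IsLevelSeq w L := by
  have hsort : ofColoring g = w ↔ w.1 = Tuple.sort g := by
    refine ⟨fun h => h ▸ rfl, fun h => Prod.ext h.symm (funext fun i => Fin.ext ?_)⟩
    simp [ofColoring, ← h, hg, Nat.mod_eq_of_lt (w.2 i).isLt]
  -- `Tuple.sort g` is the unique `σ` along which `(g (σ i), σ i)` increases lexicographically.
  rw [hsort, Tuple.eq_sort_iff', Fin.strictMono_iff_lt_succ]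
  refine forall_congr' fun i => ?_
  have hne : (w.1 i.castSucc : ℕ) ≠ w.1 i.succ :=
    Fin.val_injective.ne (w.1.injective.ne (Fin.castSucc_lt_succ (i := i)).ne)
  simp only [succ_mem_desSet_iff]
  rw [← Nat.lex_mul_add_lt_iff (w.2 _).isLt (w.2 _).isLt hne, ← hg, ← hg]
  simp only [Tuple.graphEquiv₁, Equiv.coe_trans, Equiv.coe_fn_mk, Function.comp_apply,
    Fin.val_inj]
  exact Prod.Lex.toLex_lt_toLex

lemma isLevelSeq_level (g : Fin (m + 1) → Fin (r * k + 1)) :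
    IsLevelSeq (ofColoring g) (level g) :=
  (ofColoring_eq_iff (coe_apply_sort g)).mp rfl

def reducedLevels (g : Fin (m + 1) → Fin (r * k + 1)) : Fin (m + 1) → Fin (k + 1) :=
  fun i => ⟨level g i - desUpTo (ofColoring g) i,
    Nat.lt_succ_of_le ((Nat.sub_le _ _).trans (level_le g i))⟩

lemma ofColoring_mem_plusSet {g : Fin (m + 1) → Fin (r * k + 1)} (hg : ∃ j, g j = 0) :
    ofColoring g ∈ plusSet (m + 1) r := by
  obtain ⟨j, hj⟩ := hg
  have := Tuple.apply_sort_zero_le g j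
  simp_all [mem_plusSet_iff, ofColoring]

lemma reducedLevels_mem {g : Fin (m + 1) → Fin (r * k + 1)} (hg : ∃ j, g j = 0) :
    reducedLevels g ∈ reducedSeqs m k #(desSet (ofColoring g)) := by
  have hL := isLevelSeq_level g
  have hmono : Monotone fun i => (reducedLevels g i : ℕ) := by
    rw [← isLevelSeq_add_desUpTo_iff]
    convert hL using 1
    funext i
    exact Nat.sub_add_cancel (hL.desUpTo_le i)
  refine mem_filter.mpr ⟨mem_univ _, fun a b h => hmono h, Fin.ext ?_, ?_⟩
  · simp [reducedLevels, level_zero hg]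
  · have hbound := (Nat.mul_add_le_mul_iff ((ofColoring g).2 (Fin.last m)).isLt).mp
      ((coe_apply_sort g (Fin.last m)).symm.trans_le (Fin.is_le _))
    have := hL.desUpTo_le (Fin.last m)
    rw [card_desSet_eq]
    simp only [reducedLevels, Fin.val_last] at this ⊢
    omega

lemma ofColoring_coloringOfLevels {w : ColoredPerm (m + 1) r} {c : Fin (m + 1) → Fin (k + 1)}
    (hc : c ∈ reducedSeqs m k #(desSet w)) :
    ofColoring (coloringOfLevels w _ (mul_add_le_of_mem_reducedSeqs hc)) = w :=
  (ofColoring_eq_iff (coloringOfLevels_apply_perm _ _ _)).mpr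
    ((isLevelSeq_add_desUpTo_iff w _).mpr fun _ _ h => (mem_filter.mp hc).2.1 h)

lemma level_coloringOfLevels {w : ColoredPerm (m + 1) r} {c : Fin (m + 1) → Fin (k + 1)}
    (hc : c ∈ reducedSeqs m k #(desSet w)) (i : Fin (m + 1)) :
    level (coloringOfLevels w _ (mul_add_le_of_mem_reducedSeqs hc)) i = c i + desUpTo w i := by
  have h := coe_apply_sort (coloringOfLevels w _ (mul_add_le_of_mem_reducedSeqs hc)) i
  rw [ofColoring_coloringOfLevels hc, coloringOfLevels_apply_perm, add_left_inj] at h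
  exact (Nat.eq_of_mul_eq_mul_left (Nat.pos_of_neZero r) h).symm

lemma card_fiber_ofColoring {w : ColoredPerm (m + 1) r} (hw : w ∈ plusSet (m + 1) r) :
    #{g ∈ (univ.filter fun g : Fin (m + 1) → Fin (r * k + 1) => ∃ j, g j = 0) |
      ofColoring g = w} = #(reducedSeqs m k #(desSet w)) := by
  refine card_bij' (fun g _ => reducedLevels g)
    (fun c hc => coloringOfLevels w _ (mul_add_le_of_mem_reducedSeqs hc)) ?_ ?_ ?_ ?_
  · intro g hg
    simp only [mem_filter, mem_univ, true_and] at hg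
    obtain ⟨hz, rfl⟩ := hg
    exact reducedLevels_mem hz
  · intro c hc
    refine mem_filter.mpr ⟨mem_filter.mpr ⟨mem_univ _, w.1 0, Fin.ext ?_⟩,
      ofColoring_coloringOfLevels hc⟩
    rw [coloringOfLevels_apply_perm, (mem_filter.mp hc).2.2.1, (mem_plusSet_iff w).mp hw]
    simp [desUpTo_zero]
  · intro g hg
    simp only [mem_filter, mem_univ, true_and] at hg
    obtain ⟨-, rfl⟩ := hg
    funext j
    obtain ⟨i, rfl⟩ := (ofColoring g).1.surjective j
    have := (isLevelSeq_level g).desUpTo_le i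
    apply Fin.ext
    rw [coloringOfLevels_apply_perm, coe_apply_sort g i]
    simp only [reducedLevels, Nat.sub_add_cancel this]
  · intro c hc
    funext i
    apply Fin.ext
    simp [reducedLevels, level_coloringOfLevels hc, ofColoring_coloringOfLevels hc]

lemma sum_card_reducedSeqs_add (k : ℕ) :
    ∑ w ∈ plusSet (m + 1) r, #(reducedSeqs m k #(desSet w)) + (r * k) ^ (m + 1) =
      (r * k + 1) ^ (m + 1) := by
  rw [← card_filter_exists_eq_zero_add,
    card_eq_sum_card_fiberwise fun g hg => ofColoring_mem_plusSet (mem_filter.mp hg).2]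
  congr 1
  exact sum_congr rfl fun w hw => (card_fiber_ofColoring hw).symm

end Standardization

end ColoredPerm

/-- For positive integers `n` and `r`, in `ℤ[[t]]`:
`Σ_{w ∈ (ℤ_r≀S_n)⁺} t^{des(w)} = (1−t)^n · Σ_{k≥0} ((rk+1)^n − (rk)^n) t^k`. -/
theorem plusSet_des_powerSeries (n r : ℕ) (hn : 1 ≤ n) (hr : 1 ≤ r) :
    (∑ w ∈ plusSet n r, (PowerSeries.X : PowerSeries ℤ) ^ (desSet w).card) =
      (1 - PowerSeries.X) ^ n *
        PowerSeries.mk (fun k => ((r * k + 1 : ℕ) : ℤ) ^ n - ((r * k : ℕ) : ℤ) ^ n) := by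
  obtain ⟨m, rfl⟩ : ∃ m, n = m + 1 := ⟨n - 1, by omega⟩
  have : NeZero r := ⟨by omega⟩
  have hcoeff :
      PowerSeries.mk (fun k => ((r * k + 1 : ℕ) : ℤ) ^ (m + 1) - ((r * k : ℕ) : ℤ) ^ (m + 1)) =
        ∑ w ∈ plusSet (m + 1) r, PowerSeries.mk fun k => (#(reducedSeqs m k #(desSet w)) : ℤ) := by
    ext k
    simp only [PowerSeries.coeff_mk, map_sum]
    rw [sub_eq_iff_eq_add]
    exact_mod_cast (ColoredPerm.sum_card_reducedSeqs_add k).symm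
  rw [hcoeff, mul_sum]
  refine sum_congr rfl fun w _ => ?_
  simp only [card_reducedSeqs, Nat.cast_ite, Nat.cast_zero, PowerSeries.one_sub_X_pow_mul_mk_choose]
end

section
/- For all positive integers n and r, Σ_{w ∈ (ℤ_r≀S_n)⁺} t^{des(w)} = E_r( (1 + t + t² + ⋯ + t^{r−1})^n · A_n(t) ), where (ℤ_r≀S_n)⁺ is the set of w = (σ,ε) ∈ ℤ_r ≀ S_n with ε_1 = 0, A_n(t) = Σ_{w ∈ S_n} t^{des(w)} is the Eulerian polynomial of the symmetric group, and E_r : ℤ[t] → ℤ[t] is the linear operator defined on monomials by E_r(t^k) = t^{k/r} if r divides k and E_r(t^k) = 0 otherwise. -/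
open Polynomial Finset

/-- The descent set of an ordinary permutation `w ∈ S_n`:
the set of `i ∈ [n−1]` with `w(i) > w(i+1)`. -/
def pDesSet {n : ℕ} (w : Equiv.Perm (Fin n)) : Finset ℕ :=
  (Finset.Icc 1 (n - 1)).filter fun i => sVal w (i + 1) < sVal w i

/-- The Eulerian polynomial `A_n(t) = Σ_{w ∈ S_n} t^{des(w)}` of the symmetric group. -/
noncomputable def eulerianPoly (n : ℕ) : ℤ[X] :=
  ∑ w : Equiv.Perm (Fin n), X ^ (pDesSet w).card

/-- The linear operator `E_r : ℤ[t] → ℤ[t]` with `E_r(t^k) = t^{k/r}` if `r ∣ k` and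
`E_r(t^k) = 0` otherwise. -/
noncomputable def Er (r : ℕ) (p : ℤ[X]) : ℤ[X] :=
  p.sum fun k a => if r ∣ k then C a * X ^ (k / r) else 0


/-!
Fix `σ` and let `s_k ∈ {0, 1}` indicate a descent of `σ` at `k`. Then `k` is a descent of
`(σ, ε)` iff `ε_{k+1} < ε_k + s_k`, which is exactly when reducing `ε_{k+1} - ε_k - s_k` modulo
`r` adds `r`. So, with `c_k = (ε_{k+1} - ε_k - s_k) mod r` and `ε_{n+1} = 0`, telescoping gives
`r · des(σ, ε) = Σ c_k + des(σ) + ε_1`. The map `ε ↦ c` is injective (read `ε` off from right to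
left), hence bijective, so `(1 + ⋯ + t^{r-1})^n A_n(t) = Σ_w t^{r·des(w) - ε_1}`; as
`0 ≤ ε_1 < r`, the operator `E_r` keeps exactly the terms with `ε_1 = 0`.
-/

theorem Nat.add_sub_mod_add_eq {r b d : ℕ} (hb : b < r) (hd : d ≤ r) :
    (b + r - d) % r + d = b + if b < d then r else 0 := by
  split_ifs with h
  · rw [Nat.mod_eq_of_lt (by omega)]
    omega
  · rw [show b + r - d = b - d + r by omega, Nat.add_mod_right, Nat.mod_eq_of_lt (by omega)]
    omega

theorem Finset.sum_fin_succ_eq_sum_Icc {M : Type*} [AddCommMonoid M] (f : ℕ → M) (n : ℕ) :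
    ∑ i : Fin n, f (i + 1) = ∑ k ∈ Icc 1 n, f k := by
  rw [Fin.sum_univ_eq_sum_range (fun i => f (i + 1)), range_eq_Ico, sum_Ico_add', zero_add,
    Ico_add_one_right_eq_Icc]

theorem Finset.sum_Icc_succ_add_eq {M : Type*} [AddCommMonoid M] (f : ℕ → M) (n : ℕ) :
    ∑ k ∈ Icc 1 n, f (k + 1) + f 1 = ∑ k ∈ Icc 1 n, f k + f (n + 1) := by
  induction n with
  | zero => simp
  | succ n ih =>
    rw [sum_Icc_succ_top (by omega), sum_Icc_succ_top (by omega), add_right_comm, ih,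
      add_assoc]

section ColoredPerm

variable {n r : ℕ}

theorem eVal_lt (hr : 0 < r) (ε : Fin n → Fin r) (k : ℕ) : eVal ε k < r := by
  unfold eVal
  split
  · exact (ε _).isLt
  · exact hr

theorem eVal_eq_zero_of_outside (ε : Fin n → Fin r) {k : ℕ} (hk : ¬(1 ≤ k ∧ k ≤ n)) :
    eVal ε k = 0 :=
  dif_neg hk

theorem eVal_succ (ε : Fin n → Fin r) (i : Fin n) : eVal ε (i + 1) = ε i := by
  simp [eVal]

def pDesInd (σ : Equiv.Perm (Fin n)) (k : ℕ) : ℕ :=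
  if sVal σ (k + 1) < sVal σ k then 1 else 0

theorem pDesInd_le_one (σ : Equiv.Perm (Fin n)) (k : ℕ) : pDesInd σ k ≤ 1 := by
  unfold pDesInd
  split <;> omega

theorem pDesInd_self (σ : Equiv.Perm (Fin n)) : pDesInd σ n = 0 := by
  have hlast : sVal σ n ≤ n + 1 := by
    unfold sVal
    split
    · have := (σ ⟨n - 1, by omega⟩).isLt
      omega
    · rfl
  have hout : sVal σ (n + 1) = n + 1 := dif_neg (by omega)
  simp only [pDesInd, hout]
  rw [if_neg (by omega)]

theorem card_pDesSet (σ : Equiv.Perm (Fin n)) :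
    (pDesSet σ).card = ∑ k ∈ Icc 1 n, pDesInd σ k := by
  rw [pDesSet, card_filter]
  rcases n with _ | m
  · rfl
  · rw [sum_Icc_succ_top (by omega), pDesInd_self, add_zero]
    rfl

theorem card_desSet (σ : Equiv.Perm (Fin n)) (ε : Fin n → Fin r) :
    (desSet (σ, ε)).card =
      ∑ k ∈ Icc 1 n, if eVal ε (k + 1) < eVal ε k + pDesInd σ k then 1 else 0 := by
  rw [desSet, card_filter]
  refine sum_congr rfl fun k _ => if_congr ?_ rfl rfl
  dsimp only
  unfold pDesInd
  split_ifs <;> omega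

def colorShift (σ : Equiv.Perm (Fin n)) (ε : Fin n → Fin r) (k : ℕ) : ℕ :=
  (eVal ε (k + 1) + r - (eVal ε k + pDesInd σ k)) % r

theorem colorShift_add (hr : 0 < r) (σ : Equiv.Perm (Fin n)) (ε : Fin n → Fin r) (k : ℕ) :
    colorShift σ ε k + (eVal ε k + pDesInd σ k) =
      eVal ε (k + 1) + if eVal ε (k + 1) < eVal ε k + pDesInd σ k then r else 0 :=
  Nat.add_sub_mod_add_eq (eVal_lt hr ε _)
    (by have := eVal_lt hr ε k; have := pDesInd_le_one σ k; omega)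

def shiftColors (hr : 0 < r) (σ : Equiv.Perm (Fin n)) (ε : Fin n → Fin r) : Fin n → Fin r :=
  fun i => ⟨colorShift σ ε (i + 1), Nat.mod_lt _ hr⟩

theorem sum_shiftColors_add (hr : 0 < r) (σ : Equiv.Perm (Fin n)) (ε : Fin n → Fin r) :
    ∑ i, (shiftColors hr σ ε i : ℕ) + (pDesSet σ).card + eVal ε 1 =
      r * (desSet (σ, ε)).card := by
  have hsum := sum_congr rfl fun k (_ : k ∈ Icc 1 n) => colorShift_add hr σ ε k
  simp only [sum_add_distrib] at hsum
  have htelescope := sum_Icc_succ_add_eq (eVal ε) n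
  have hlast : eVal ε (n + 1) = 0 := eVal_eq_zero_of_outside ε (by omega)
  have hdes : r * (desSet (σ, ε)).card =
      ∑ k ∈ Icc 1 n, if eVal ε (k + 1) < eVal ε k + pDesInd σ k then r else 0 := by
    rw [card_desSet, mul_sum]
    exact sum_congr rfl fun k _ => by split_ifs <;> simp
  simp only [shiftColors, sum_fin_succ_eq_sum_Icc (colorShift σ ε), card_pDesSet, hdes]
  omega

theorem eVal_eq_of_shiftColors_eq (hr : 0 < r) (σ : Equiv.Perm (Fin n)) {ε ε' : Fin n → Fin r}
    (h : shiftColors hr σ ε = shiftColors hr σ ε') (k : ℕ) : eVal ε k = eVal ε' k := by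
  suffices ∀ m k, n < k + m → eVal ε k = eVal ε' k from this (n + 1) k (by omega)
  intro m
  induction m with
  | zero =>
    intro k hk
    rw [eVal_eq_zero_of_outside ε (by omega), eVal_eq_zero_of_outside ε' (by omega)]
  | succ m ih =>
    intro k hk
    by_cases hkn : 1 ≤ k ∧ k ≤ n
    · obtain ⟨j, rfl⟩ : ∃ j, k = j + 1 := ⟨k - 1, by omega⟩
      have hshift : colorShift σ ε (j + 1) = colorShift σ ε' (j + 1) :=
        congrArg Fin.val (congrFun h ⟨j, by omega⟩)
      have hε := colorShift_add hr σ ε (j + 1)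
      have hε' := colorShift_add hr σ ε' (j + 1)
      rw [hshift, ih (j + 1 + 1) (by omega)] at hε
      have := eVal_lt hr ε (j + 1)
      have := eVal_lt hr ε' (j + 1)
      split_ifs at hε hε' <;> omega
    · rw [eVal_eq_zero_of_outside ε hkn, eVal_eq_zero_of_outside ε' hkn]

theorem shiftColors_injective (hr : 0 < r) (σ : Equiv.Perm (Fin n)) :
    Function.Injective (shiftColors hr σ) := fun ε ε' h =>
  funext fun i => Fin.ext <| by
    rw [← eVal_succ, ← eVal_succ]
    exact eVal_eq_of_shiftColors_eq hr σ h _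

theorem bijective_shiftColors (hr : 0 < r) :
    Function.Bijective fun w : ColoredPerm n r => (w.1, shiftColors hr w.1 w.2) := by
  refine Finite.injective_iff_bijective.mp fun w w' h => ?_
  obtain ⟨hσ, hε⟩ := Prod.mk.inj h
  obtain ⟨σ, ε⟩ := w
  obtain ⟨σ', ε'⟩ := w'
  dsimp only at hσ hε
  subst hσ
  rw [shiftColors_injective hr σ hε]

theorem geom_pow_mul_eulerianPoly :
    (∑ j ∈ range r, (X : ℤ[X]) ^ j) ^ n * eulerianPoly n =
      ∑ w : ColoredPerm n r, X ^ (∑ i, (w.2 i : ℕ) + (pDesSet w.1).card) := by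
  rw [← Fin.sum_univ_eq_sum_range (fun j => (X : ℤ[X]) ^ j), Fintype.sum_pow, eulerianPoly,
    sum_mul_sum, Fintype.sum_prod_type_right]
  simp only [prod_pow_eq_pow_sum, pow_add]

end ColoredPerm

section Er

variable {r : ℕ}

theorem Er_add (p q : ℤ[X]) : Er r (p + q) = Er r p + Er r q :=
  sum_add_index p q _ (fun _ => by simp) fun _ _ _ => by split <;> simp [add_mul]

theorem Er_sum {ι : Type*} (s : Finset ι) (g : ι → ℤ[X]) :
    Er r (∑ i ∈ s, g i) = ∑ i ∈ s, Er r (g i) :=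
  map_sum (AddMonoidHom.mk' (Er r) Er_add) g s

theorem Er_X_pow (m : ℕ) : Er r (X ^ m) = if r ∣ m then X ^ (m / r) else 0 := by
  rw [Er, X_pow_eq_monomial, sum_monomial_index] <;> simp

theorem Er_X_pow_of_add_eq {m e d : ℕ} (hr : 0 < r) (he : e < r) (h : m + e = r * d) :
    Er r (X ^ m) = if e = 0 then X ^ d else 0 := by
  rw [Er_X_pow]
  rcases eq_or_ne e 0 with rfl | he0
  · subst h
    simp [Nat.mul_div_cancel_left d hr]
  · have hndvd : ¬r ∣ m := fun hdvd => he0 <| Nat.eq_zero_of_dvd_of_lt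
      (by rw [show e = r * d - m by omega]; exact Nat.dvd_sub (dvd_mul_right r d) hdvd) he
    simp [hndvd, he0]

end Er

theorem plusSet_des_eq_Er_general (n r : ℕ) (hr : 1 ≤ r) :
    (∑ w ∈ plusSet n r, (X : ℤ[X]) ^ (desSet w).card) =
      Er r ((∑ j ∈ range r, (X : ℤ[X]) ^ j) ^ n * eulerianPoly n) := by
  rw [geom_pow_mul_eulerianPoly, ← (bijective_shiftColors hr).sum_comp, Er_sum, plusSet,
    sum_filter]
  refine sum_congr rfl fun w _ => ?_
  rw [Er_X_pow_of_add_eq hr (eVal_lt hr w.2 1) (sum_shiftColors_add hr w.1 w.2)]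

/-- For positive integers `n` and `r`,
`Σ_{w ∈ (ℤ_r≀S_n)⁺} t^{des(w)} = E_r((1 + t + ⋯ + t^{r−1})^n · A_n(t))`. -/
theorem plusSet_des_eq_Er (n r : ℕ) (hn : 1 ≤ n) (hr : 1 ≤ r) :
    (∑ w ∈ plusSet n r, (X : ℤ[X]) ^ (desSet w).card) =
      Er r ((∑ j ∈ range r, (X : ℤ[X]) ^ j) ^ n * eulerianPoly n) :=
  plusSet_des_eq_Er_general n r hr
end

section
/- Let Δ be a finite abstract simplicial complex on a linearly ordered vertex set, let r be a positive integer, and let a finite group G act simplicially on Δ preserving the induced linear order on vertex sets of faces (if {u,v} ∈ Δ and u < v then w·u < w·v for all w ∈ G), with induced action on V_r(Δ) given by (w·f)(v) = f(w⁻¹·v). Then: (i) for every w ∈ G and every face E of esd_r(Δ), the set w(E) = {w·f : f ∈ E} is a face of esd_r(Δ), so G acts simplicially on esd_r(Δ); and (ii) this action is proper, i.e. whenever w(E) = E for a face E of esd_r(Δ), one has w·f = f for every f ∈ E. -/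
/-!
Every `f ∈ E` is supported in the face `F = ⋃_{f ∈ E} supp f` of `Δ`, on which `w` is strictly
increasing. Hence `w` carries initial segments of `F` to initial segments of `w F`, so the partial
sums `ι(w·f)` are partial sums `ι(f)` at suitable points, and `ι`-compatibility survives. If
`w(E) = E`, then `w` maps `F` onto itself increasingly, so it fixes `F` pointwise, and with it
every `f ∈ E`.
-/

open Finset

variable {V : Type*} [Fintype V] [DecidableEq V] [LinearOrder V]

/-- The support `supp(f) = {v : f(v) ≠ 0}` of a function `f : V → ℕ`. -/
def suppF (f : V → ℕ) : Finset V :=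
  Finset.univ.filter fun v => f v ≠ 0

/-- `f` is a vertex of the `r`-fold edgewise subdivision of `Δ`, i.e. `f ∈ V_r(Δ)`:
`supp(f) ∈ Δ` and `Σ_v f(v) = r`. -/
def memVr (Δ : Finset (Finset V)) (r : ℕ) (f : V → ℕ) : Prop :=
  suppF f ∈ Δ ∧ ∑ v, f v = r

/-- `ι(f)(v) = Σ_{u ≤ v} f(u)`, the partial sums of `f` along the linear order on `V`. -/
def iotaF (f : V → ℕ) (v : V) : ℕ :=
  ∑ u ∈ Finset.univ.filter (· ≤ v), f u

/-- Compatibility of two vertices of the edgewise subdivision: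
`ι(f) − ι(g) ∈ {0,1}^V` or `ι(g) − ι(f) ∈ {0,1}^V`. -/
def iotaCompat (f g : V → ℕ) : Prop :=
  (∀ v, ((iotaF f v : ℤ) - iotaF g v) ∈ ({0, 1} : Set ℤ)) ∨
    (∀ v, ((iotaF g v : ℤ) - iotaF f v) ∈ ({0, 1} : Set ℤ))

/-- `E` is a face of the `r`-fold edgewise subdivision `esd_r(Δ)`: a finite set of
elements of `V_r(Δ)` such that the union of their supports is a face of `Δ` and any two
of them are `ι`-compatible. -/
def IsEsdFace (Δ : Finset (Finset V)) (r : ℕ) (E : Finset (V → ℕ)) : Prop :=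
  (∀ f ∈ E, memVr Δ r f) ∧ E.biUnion suppF ∈ Δ ∧
    ∀ f ∈ E, ∀ g ∈ E, iotaCompat f g

/-- The action of a group element `w` on `V_r(Δ)`: `(w·f)(v) = f(w⁻¹·v)`. -/
def actVr {G : Type*} [Group G] [MulAction G V] (w : G) (f : V → ℕ) : V → ℕ :=
  fun v => f (w⁻¹ • v)

lemma Finset.eq_self_of_strictMonoOn_of_image_eq {α : Type*} [LinearOrder α] [DecidableEq α]
    {s : Finset α} {φ : α → α} (hφ : StrictMonoOn φ s) (himg : s.image φ = s) :
    ∀ x ∈ s, φ x = x := by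
  have hmaps : ∀ x ∈ s, φ x ∈ s := fun x hx => himg ▸ mem_image_of_mem φ hx
  let ψ : s → s := fun x => ⟨φ x, hmaps x x.2⟩
  have hψ : StrictMono ψ := fun x y hxy => hφ x.2 y.2 hxy
  have hsurj : Function.Surjective ψ := by
    rintro ⟨y, hy⟩
    obtain ⟨x, hx, rfl⟩ := mem_image.mp (himg.symm ▸ hy)
    exact ⟨⟨x, hx⟩, rfl⟩
  -- A finite linear order has only one order automorphism.
  intro x hx
  exact congrArg Subtype.val <| DFunLike.congr_fun
    (Subsingleton.elim (hψ.orderIsoOfSurjective ψ hsurj) (OrderIso.refl s)) ⟨x, hx⟩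

lemma Finset.filter_apply_le_eq_empty_or {α : Type*} [LinearOrder α] {s : Finset α}
    {φ : α → α} (hφ : StrictMonoOn φ s) (v : α) :
    s.filter (φ · ≤ v) = ∅ ∨ ∃ t, s.filter (φ · ≤ v) = s.filter (· ≤ t) := by
  rcases (s.filter (φ · ≤ v)).eq_empty_or_nonempty with hS | hS
  · exact Or.inl hS
  refine Or.inr ⟨(s.filter (φ · ≤ v)).max' hS, ?_⟩
  have ht := mem_filter.mp ((s.filter (φ · ≤ v)).max'_mem hS)
  ext u
  simp only [mem_filter, and_congr_right_iff]
  intro hu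
  refine ⟨fun h => le_max' _ u (mem_filter.mpr ⟨hu, h⟩), fun h => ?_⟩
  exact (hφ.le_iff_le hu ht.1).mpr h |>.trans ht.2

omit [DecidableEq V] [LinearOrder V] in
lemma mem_suppF {f : V → ℕ} {v : V} : v ∈ suppF f ↔ f v ≠ 0 := by
  simp [suppF]

omit [DecidableEq V] [LinearOrder V] in
lemma sum_filter_eq_of_suppF_subset {f : V → ℕ} {F : Finset V} (hf : suppF f ⊆ F)
    (P : V → Prop) [DecidablePred P] :
    ∑ u ∈ univ.filter P, f u = ∑ u ∈ F.filter P, f u := by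
  refine (sum_subset (filter_subset_filter P (subset_univ F)) fun u hu hnu => ?_).symm
  by_contra h
  exact hnu (filter_subset_filter P hf (mem_filter.mpr ⟨mem_suppF.mpr h, (mem_filter.mp hu).2⟩))

section Action

variable {G : Type*} [Group G] [MulAction G V]

omit [LinearOrder V] in
lemma suppF_actVr (w : G) (f : V → ℕ) :
    suppF (actVr w f) = (suppF f).image (w • ·) := by
  ext v
  simp only [mem_suppF, actVr, mem_image]
  exact ⟨fun h => ⟨w⁻¹ • v, h, smul_inv_smul w v⟩, by rintro ⟨u, hu, rfl⟩; simpa using hu⟩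

omit [LinearOrder V] in
lemma biUnion_suppF_image_actVr (w : G) (E : Finset (V → ℕ)) :
    (E.image (actVr w)).biUnion suppF = (E.biUnion suppF).image (w • ·) := by
  simp only [image_biUnion, biUnion_image, suppF_actVr]

omit [DecidableEq V] [LinearOrder V] in
lemma sum_actVr (w : G) (f : V → ℕ) : ∑ v, actVr w f v = ∑ v, f v :=
  Fintype.sum_equiv (MulAction.toPerm w⁻¹) _ _ fun u => by simp [actVr]

omit [DecidableEq V] in
lemma iotaF_actVr (w : G) (f : V → ℕ) (v : V) :
    iotaF (actVr w f) v = ∑ u ∈ univ.filter (w • · ≤ v), f u := by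
  rw [iotaF, sum_filter, sum_filter]
  exact Fintype.sum_equiv (MulAction.toPerm w⁻¹) _ _ fun u => by simp [actVr]

omit [DecidableEq V] in
lemma iotaF_actVr_sub_mem {w : G} {F : Finset V} (hw : StrictMonoOn (w • ·) (F : Set V))
    {f g : V → ℕ} (hf : suppF f ⊆ F) (hg : suppF g ⊆ F)
    (h : ∀ v, ((iotaF f v : ℤ) - iotaF g v) ∈ ({0, 1} : Set ℤ)) (v : V) :
    ((iotaF (actVr w f) v : ℤ) - iotaF (actVr w g) v) ∈ ({0, 1} : Set ℤ) := by
  rw [iotaF_actVr, iotaF_actVr, sum_filter_eq_of_suppF_subset hf,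
    sum_filter_eq_of_suppF_subset hg]
  -- `w` sends an initial segment of `F` (empty, or `{u ∈ F | u ≤ t}`) below `v`, so both
  -- partial sums of `w·f`, `w·g` at `v` vanish or equal those of `f`, `g` at `t`.
  rcases F.filter_apply_le_eq_empty_or hw v with hS | ⟨t, hS⟩
  · simp [hS]
  · simpa only [hS, iotaF, ← sum_filter_eq_of_suppF_subset hf,
      ← sum_filter_eq_of_suppF_subset hg] using h t

omit [DecidableEq V] in
lemma iotaCompat_actVr {w : G} {F : Finset V} (hw : StrictMonoOn (w • ·) (F : Set V))
    {f g : V → ℕ} (hf : suppF f ⊆ F) (hg : suppF g ⊆ F) (h : iotaCompat f g) :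
    iotaCompat (actVr w f) (actVr w g) :=
  h.imp (iotaF_actVr_sub_mem hw hf hg) (iotaF_actVr_sub_mem hw hg hf)

omit [DecidableEq V] [LinearOrder V] in
lemma actVr_eq_self_of_forall_smul_eq {w : G} {f : V → ℕ}
    (hfix : ∀ v ∈ suppF f, w • v = v) : actVr w f = f := by
  funext v
  show f (w⁻¹ • v) = f v
  by_cases h : f (w⁻¹ • v) = 0
  · by_contra hv
    have hv' : f v ≠ 0 := fun h0 => hv (h.trans h0.symm)
    rw [inv_smul_eq_iff.mpr (hfix v (mem_suppF.mpr hv')).symm] at h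
    exact hv' h
  · have hv := hfix _ (mem_suppF.mpr h)
    rw [smul_inv_smul] at hv
    rw [← hv]

variable {Δ : Finset (Finset V)} {r : ℕ}

omit [Fintype V] in
lemma strictMonoOn_smul_of_mem (hdown : ∀ F ∈ Δ, ∀ F' ⊆ F, F' ∈ Δ)
    (horder : ∀ (w : G) (u v : V), ({u, v} : Finset V) ∈ Δ → u < v → w • u < w • v)
    (w : G) {F : Finset V} (hF : F ∈ Δ) : StrictMonoOn (w • ·) (F : Set V) :=
  fun u hu v hv huv => horder w u v (hdown F hF _ (insert_subset_iff.mpr ⟨hu, by simpa⟩)) huv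

lemma IsEsdFace.image_actVr (hact : ∀ (w : G), ∀ F ∈ Δ, F.image (w • ·) ∈ Δ)
    {w : G} {E : Finset (V → ℕ)} (hw : StrictMonoOn (w • ·) (E.biUnion suppF : Set V))
    (hE : IsEsdFace Δ r E) : IsEsdFace Δ r (E.image (actVr w)) := by
  obtain ⟨hmem, hF, hcompat⟩ := hE
  refine ⟨?_, biUnion_suppF_image_actVr w E ▸ hact w _ hF, ?_⟩
  · simp only [mem_image, forall_exists_index, and_imp, forall_apply_eq_imp_iff₂]
    intro f hf
    exact ⟨suppF_actVr w f ▸ hact w _ (hmem f hf).1, (sum_actVr w f).trans (hmem f hf).2⟩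
  · simp only [mem_image, forall_exists_index, and_imp, forall_apply_eq_imp_iff₂]
    intro f hf g hg
    exact iotaCompat_actVr hw (subset_biUnion_of_mem suppF hf) (subset_biUnion_of_mem suppF hg)
      (hcompat f hf g hg)

lemma actVr_eq_self_of_image_actVr_eq {w : G} {E : Finset (V → ℕ)}
    (hw : StrictMonoOn (w • ·) (E.biUnion suppF : Set V)) (hEw : E.image (actVr w) = E) :
    ∀ f ∈ E, actVr w f = f := by
  have himg : (E.biUnion suppF).image (w • ·) = E.biUnion suppF := by
    rw [← biUnion_suppF_image_actVr, hEw]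
  intro f hf
  exact actVr_eq_self_of_forall_smul_eq fun v hv =>
    (E.biUnion suppF).eq_self_of_strictMonoOn_of_image_eq hw himg v
      (subset_biUnion_of_mem suppF hf hv)

end Action

theorem esd_action_simplicial_and_proper_general
    {V : Type*} [Fintype V] [DecidableEq V] [LinearOrder V]
    {G : Type*} [Group G] [MulAction G V]
    (Δ : Finset (Finset V)) (r : ℕ)
    (hdown : ∀ F ∈ Δ, ∀ F' ⊆ F, F' ∈ Δ)
    (hact : ∀ (w : G), ∀ F ∈ Δ, F.image (fun v => w • v) ∈ Δ)
    (horder : ∀ (w : G) (u v : V), ({u, v} : Finset V) ∈ Δ → u < v → w • u < w • v) :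
    (∀ (w : G) (E : Finset (V → ℕ)), IsEsdFace Δ r E →
        IsEsdFace Δ r (E.image (actVr w))) ∧
    (∀ (w : G) (E : Finset (V → ℕ)), IsEsdFace Δ r E →
        E.image (actVr w) = E → ∀ f ∈ E, actVr w f = f) := by
  have hw : ∀ (w : G) {E : Finset (V → ℕ)}, IsEsdFace Δ r E →
      StrictMonoOn (w • ·) (E.biUnion suppF : Set V) :=
    fun w _ hE => strictMonoOn_smul_of_mem hdown horder w hE.2.1
  exact ⟨fun w E hE => hE.image_actVr hact (hw w hE),
    fun w E hE => actVr_eq_self_of_image_actVr_eq (hw w hE)⟩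

/-- Let `Δ` be a finite simplicial complex on a linearly ordered vertex
set and let the finite group `G` act simplicially on `Δ`, preserving the induced linear
order on vertex sets of faces. Then the induced action on `V_r(Δ)` maps faces of
`esd_r(Δ)` to faces of `esd_r(Δ)`, and this action is proper: if `w(E) = E` for a face
`E` of `esd_r(Δ)`, then `w` fixes `E` pointwise. -/
theorem esd_action_simplicial_and_proper
    {V : Type*} [Fintype V] [DecidableEq V] [LinearOrder V]
    {G : Type*} [Group G] [Finite G] [MulAction G V]
    (Δ : Finset (Finset V)) (r : ℕ) (hr : 1 ≤ r)
    (hdown : ∀ F ∈ Δ, ∀ F' ⊆ F, F' ∈ Δ)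
    (hact : ∀ (w : G), ∀ F ∈ Δ, F.image (fun v => w • v) ∈ Δ)
    (horder : ∀ (w : G) (u v : V), ({u, v} : Finset V) ∈ Δ → u < v → w • u < w • v) :
    (∀ (w : G) (E : Finset (V → ℕ)), IsEsdFace Δ r E →
        IsEsdFace Δ r (E.image (actVr w))) ∧
    (∀ (w : G) (E : Finset (V → ℕ)), IsEsdFace Δ r E →
        E.image (actVr w) = E → ∀ f ∈ E, actVr w f = f) :=
  esd_action_simplicial_and_proper_general Δ r hdown hact horder
end
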